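/- Let n ≥ 8 be divisible by 4, and let G be the cubic bipartite graph with vertex set {x_i, y_i : i ∈ ℤ_n} and edges x_i y_{i-2}, x_i y_i, x_i y_{i+1} (indices mod n). Then the square G² is not 5-choosable; in fact there is a list assignment L with |L(v)| = 4 for every vertex, where each list is of the form {1,...,5}∖{i}, admitting no proper L-coloring of G². -/

import Mathlib

/-!
In the square, any four consecutive `x_k` are pairwise adjacent, so on lists `{2, 3, 4, 5}` the
colours of the `x_k` run 4-periodically through all of `{2, …, 5}`. Since `y_k` is adjacent to
`x_{k-1}, x_k, x_{k+2}`, it gets colour `1` or the colour of `x_{k+1}`. Among `y_{-3}, …, y_0`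
(lists `{1, 2, 4, 5}`), the `y_q` with `x_{q+1}` coloured `3` must get `1`. The `x` coloured `2`
in the same block recurs at distance 4 on the side of `q`, next to a `y` with list `{1, 3, 4, 5}`,
which must then get `1` as well, yet lies within distance 3 of `y_q`.
-/

open SimpleGraph

/-- The square of a graph: vertices at distance at most 2 are adjacent. -/
def square {V : Type*} (G : SimpleGraph V) : SimpleGraph V where
  Adj u v := u ≠ v ∧ (G.Adj u v ∨ ∃ w, G.Adj u w ∧ G.Adj w v)
  symm := by
    refine ⟨?_⟩
    rintro u v ⟨h, h2 | ⟨w, hw1, hw2⟩⟩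
    · exact ⟨h.symm, Or.inl h2.symm⟩
    · exact ⟨h.symm, Or.inr ⟨w, hw2.symm, hw1.symm⟩⟩
  loopless := ⟨fun u h => h.1 rfl⟩

/-- The cubic bipartite graph on `{x_i} ⊕ {y_i}`, `i ∈ ZMod n`, with edges
`x_i y_{i-2}`, `x_i y_i`, `x_i y_{i+1}`. -/
def cubicGraphA (n : ℕ) : SimpleGraph (ZMod n ⊕ ZMod n) where
  Adj a b := match a, b with
    | .inl i, .inr j => j = i - 2 ∨ j = i ∨ j = i + 1
    | .inr j, .inl i => j = i - 2 ∨ j = i ∨ j = i + 1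
    | _, _ => False
  symm := by
    refine ⟨?_⟩
    rintro (i | i) (j | j) h
    · exact h.elim
    · exact h
    · exact h
    · exact h.elim
  loopless := by refine ⟨?_⟩; rintro (i | i) h <;> exact h

/-- The explicit list assignment: `x_i` gets `{2,3,4,5}`; `y_i` gets `{1,2,4,5}`
for `n - 3 ≤ i ≤ n` (representatives in `{1,…,n}`) and `{1,3,4,5}` otherwise. -/
def listsA (n : ℕ) : ZMod n ⊕ ZMod n → Finset ℕ := fun v =>
  match v with
  | .inl _ => {2, 3, 4, 5}
  | .inr i => if n - 3 ≤ i.val ∨ i.val = 0 then {1, 2, 4, 5} else {1, 3, 4, 5}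

section Square

variable {V : Type*} {G : SimpleGraph V} {u v w : V}

theorem square_adj_of_adj (h : G.Adj u v) : (square G).Adj u v :=
  ⟨h.ne, Or.inl h⟩

theorem square_adj_of_adj_of_adj (huv : u ≠ v) (huw : G.Adj u w) (hwv : G.Adj w v) :
    (square G).Adj u v :=
  ⟨huv, Or.inr ⟨w, huw, hwv⟩⟩

end Square

/-- Colours `x k` of `x_k` and `y k` of `y_k` for the `ℤ`-indexed version of `cubicGraphA`,
distinct across every edge of its square. -/
structure IsSquareColoring (x y : ℤ → ℕ) : Prop where
  x_ne : ∀ i j, i < j → j ≤ i + 3 → x i ≠ x j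
  y_ne : ∀ i j, i < j → j ≤ i + 3 → y i ≠ y j
  x_ne_y : ∀ i j, j = i - 2 ∨ j = i ∨ j = i + 1 → x i ≠ y j

namespace IsSquareColoring

variable {x y : ℤ → ℕ}

theorem x_add_four (h : IsSquareColoring x y) (hx : ∀ k, 2 ≤ x k ∧ x k ≤ 5) (k : ℤ) :
    x (k + 4) = x k := by
  have := hx k; have := hx (k + 1); have := hx (k + 2); have := hx (k + 3); have := hx (k + 4)
  have := h.x_ne k (k + 1) (by omega) (by omega)
  have := h.x_ne k (k + 2) (by omega) (by omega)
  have := h.x_ne k (k + 3) (by omega) (by omega)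
  have := h.x_ne (k + 1) (k + 2) (by omega) (by omega)
  have := h.x_ne (k + 1) (k + 3) (by omega) (by omega)
  have := h.x_ne (k + 2) (k + 3) (by omega) (by omega)
  have := h.x_ne (k + 1) (k + 4) (by omega) (by omega)
  have := h.x_ne (k + 2) (k + 4) (by omega) (by omega)
  have := h.x_ne (k + 3) (k + 4) (by omega) (by omega)
  omega

theorem exists_x_eq (h : IsSquareColoring x y) (hx : ∀ k, 2 ≤ x k ∧ x k ≤ 5) (k : ℤ) {a : ℕ}
    (ha₁ : 2 ≤ a) (ha₂ : a ≤ 5) : ∃ j, k ≤ j ∧ j ≤ k + 3 ∧ x j = a := by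
  by_contra! hna
  have := hna k; have := hna (k + 1); have := hna (k + 2); have := hna (k + 3)
  have := hx k; have := hx (k + 1); have := hx (k + 2); have := hx (k + 3)
  have := h.x_ne k (k + 1) (by omega) (by omega)
  have := h.x_ne k (k + 2) (by omega) (by omega)
  have := h.x_ne k (k + 3) (by omega) (by omega)
  have := h.x_ne (k + 1) (k + 2) (by omega) (by omega)
  have := h.x_ne (k + 1) (k + 3) (by omega) (by omega)
  have := h.x_ne (k + 2) (k + 3) (by omega) (by omega)
  omega

/-- `y_k` sees `x_{k-1}, x_k, x_{k+2}`, which use up all colours of `{2, …, 5}` but `x (k + 1)`. -/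
theorem y_eq_one_or_eq (h : IsSquareColoring x y) (hx : ∀ k, 2 ≤ x k ∧ x k ≤ 5) {k : ℤ}
    (hy₁ : 1 ≤ y k) (hy₅ : y k ≤ 5) : y k = 1 ∨ y k = x (k + 1) := by
  have := hx (k - 1); have := hx k; have := hx (k + 1); have := hx (k + 2)
  have := h.x_ne (k - 1) k (by omega) (by omega)
  have := h.x_ne (k - 1) (k + 1) (by omega) (by omega)
  have := h.x_ne (k - 1) (k + 2) (by omega) (by omega)
  have := h.x_ne k (k + 1) (by omega) (by omega)
  have := h.x_ne k (k + 2) (by omega) (by omega)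
  have := h.x_ne (k + 1) (k + 2) (by omega) (by omega)
  have := h.x_ne_y (k - 1) k (by omega)
  have := h.x_ne_y k k (by omega)
  have := h.x_ne_y (k + 2) k (by omega)
  omega

theorem false_of_lists (h : IsSquareColoring x y) (hx : ∀ k, 2 ≤ x k ∧ x k ≤ 5)
    (hy : ∀ k, 1 ≤ y k ∧ y k ≤ 5) (hy_special : ∀ k, -3 ≤ k → k ≤ 0 → y k ≠ 3)
    (hy_normal : ∀ k, -7 ≤ k → k ≤ 4 → k < -3 ∨ 0 < k → y k ≠ 2) : False := by
  have hy_eq_one : ∀ k, y k ≠ x (k + 1) → y k = 1 := fun k hk =>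
    (h.y_eq_one_or_eq hx (hy k).1 (hy k).2).resolve_right hk
  obtain ⟨q, hq₁, hq₂, hxq⟩ := h.exists_x_eq hx (-2) (a := 3) (by norm_num) (by norm_num)
  obtain ⟨p, hp₁, hp₂, hxp⟩ := h.exists_x_eq hx (-2) (a := 2) (by norm_num) (by norm_num)
  have hyq : y (q - 1) = 1 :=
    hy_eq_one _ (by rw [sub_add_cancel, hxq]; exact hy_special _ (by omega) (by omega))
  rcases lt_or_gt_of_ne (show p ≠ q by rintro rfl; omega) with hpq | hpq
  · have hyp : y (p + 3) = 1 := hy_eq_one _ <| by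
      rw [add_assoc, show (3 + 1 : ℤ) = 4 by norm_num, h.x_add_four hx, hxp]
      exact hy_normal _ (by omega) (by omega) (by omega)
    exact h.y_ne (q - 1) (p + 3) (by omega) (by omega) (hyq.trans hyp.symm)
  · have hyp : y (p - 5) = 1 := hy_eq_one _ <| by
      rw [show p - 5 + 1 = p - 4 by ring, ← h.x_add_four hx, sub_add_cancel, hxp]
      exact hy_normal _ (by omega) (by omega) (by omega)
    exact h.y_ne (p - 5) (q - 1) (by omega) (by omega) (hyp.trans hyq.symm)

end IsSquareColoring

section ZModIntCast

variable {n : ℕ}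

theorem ZMod.intCast_ne_intCast_of_lt {i j : ℤ} (hij : i < j) (hji : j < i + n) :
    (i : ZMod n) ≠ j := by
  rw [Ne, ZMod.intCast_eq_intCast_iff_dvd_sub]
  intro hdvd
  have := Int.le_of_dvd (by omega) hdvd
  omega

theorem ZMod.val_intCast_of_neg_le_of_lt [NeZero n] {k : ℤ} (hk₁ : -n ≤ k) (hk₂ : k < n) :
    ((k : ZMod n).val : ℤ) = if k < 0 then k + n else k := by
  rw [ZMod.val_intCast]
  split_ifs with hk
  · rw [← Int.add_emod_right]
    exact Int.emod_eq_of_lt (by omega) (by omega)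
  · exact Int.emod_eq_of_lt (by omega) hk₂

end ZModIntCast

section CubicGraphA

variable {n : ℕ}

@[simp]
theorem cubicGraphA_adj_inl_inr {i j : ZMod n} :
    (cubicGraphA n).Adj (.inl i) (.inr j) ↔ j = i - 2 ∨ j = i ∨ j = i + 1 :=
  Iff.rfl

@[simp]
theorem cubicGraphA_adj_inr_inl {i j : ZMod n} :
    (cubicGraphA n).Adj (.inr j) (.inl i) ↔ j = i - 2 ∨ j = i ∨ j = i + 1 :=
  Iff.rfl

theorem square_cubicGraphA_adj_inl (hn : 3 < n) {i j : ℤ} (hij : i < j) (hji : j ≤ i + 3) :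
    (square (cubicGraphA n)).Adj (.inl (i : ZMod n)) (.inl (j : ZMod n)) := by
  have hne : (Sum.inl (i : ZMod n) : ZMod n ⊕ ZMod n) ≠ .inl (j : ZMod n) := by
    simpa using ZMod.intCast_ne_intCast_of_lt hij (by omega)
  obtain rfl | rfl | rfl : j = i + 1 ∨ j = i + 2 ∨ j = i + 3 := by omega
  · exact square_adj_of_adj_of_adj (w := .inr (i + 1 : ℤ)) hne (by simp) (by simp)
  · exact square_adj_of_adj_of_adj (w := .inr (i : ℤ)) hne (by simp) (by simp)
  · exact square_adj_of_adj_of_adj (w := .inr (i + 1 : ℤ)) hne (by simp)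
      (Or.inl (by push_cast; ring))

theorem square_cubicGraphA_adj_inr (hn : 3 < n) {i j : ℤ} (hij : i < j) (hji : j ≤ i + 3) :
    (square (cubicGraphA n)).Adj (.inr (i : ZMod n)) (.inr (j : ZMod n)) := by
  have hne : (Sum.inr (i : ZMod n) : ZMod n ⊕ ZMod n) ≠ .inr (j : ZMod n) := by
    simpa using ZMod.intCast_ne_intCast_of_lt hij (by omega)
  obtain rfl | rfl | rfl : j = i + 1 ∨ j = i + 2 ∨ j = i + 3 := by omega
  · exact square_adj_of_adj_of_adj (w := .inl (i : ℤ)) hne (by simp) (by simp)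
  · exact square_adj_of_adj_of_adj (w := .inl (i + 2 : ℤ)) hne (by push_cast; simp) (by simp)
  · exact square_adj_of_adj_of_adj (w := .inl (i + 2 : ℤ)) hne (by push_cast; simp)
      (Or.inr (Or.inr (by push_cast; ring)))

theorem isSquareColoring_of_forall_adj (hn : 3 < n) {c : ZMod n ⊕ ZMod n → ℕ}
    (hc : ∀ ⦃u v⦄, (square (cubicGraphA n)).Adj u v → c u ≠ c v) :
    IsSquareColoring (fun k : ℤ => c (.inl k)) (fun k : ℤ => c (.inr k)) where
  x_ne _ _ hij hji := hc (square_cubicGraphA_adj_inl hn hij hji)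
  y_ne _ _ hij hji := hc (square_cubicGraphA_adj_inr hn hij hji)
  x_ne_y i j hij := hc <| square_adj_of_adj <| by
    rw [cubicGraphA_adj_inl_inr]
    rcases hij with rfl | rfl | rfl <;> push_cast <;> simp

end CubicGraphA

section ListsA

variable {n : ℕ}

theorem listsA_subset_Icc (v : ZMod n ⊕ ZMod n) : listsA n v ⊆ Finset.Icc 1 5 := by
  rcases v with i | i <;> simp only [listsA]
  · decide
  · split_ifs <;> decide

theorem listsA_inr_intCast (hn : 8 ≤ n) {k : ℤ} (hk₁ : -7 ≤ k) (hk₂ : k ≤ 4) :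
    listsA n (.inr (k : ZMod n)) = if -3 ≤ k ∧ k ≤ 0 then {1, 2, 4, 5} else {1, 3, 4, 5} := by
  have : NeZero n := ⟨by omega⟩
  have hval := ZMod.val_intCast_of_neg_le_of_lt (n := n) (k := k) (by omega) (by omega)
  refine if_congr ?_ rfl rfl
  split_ifs at hval <;> omega

theorem mem_Icc_of_mem_listsA_inl {i : ZMod n} {a : ℕ} (ha : a ∈ listsA n (.inl i)) :
    2 ≤ a ∧ a ≤ 5 := by
  simp only [listsA, Finset.mem_insert, Finset.mem_singleton] at ha
  omega

theorem ne_three_of_mem_listsA_inr (hn : 8 ≤ n) {k : ℤ} (hk₁ : -3 ≤ k) (hk₂ : k ≤ 0) {a : ℕ}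
    (ha : a ∈ listsA n (.inr (k : ZMod n))) : a ≠ 3 := by
  rw [listsA_inr_intCast hn (by omega) (by omega), if_pos ⟨hk₁, hk₂⟩] at ha
  simp only [Finset.mem_insert, Finset.mem_singleton] at ha
  omega

theorem ne_two_of_mem_listsA_inr (hn : 8 ≤ n) {k : ℤ} (hk₁ : -7 ≤ k) (hk₂ : k ≤ 4)
    (hk : k < -3 ∨ 0 < k) {a : ℕ} (ha : a ∈ listsA n (.inr (k : ZMod n))) : a ≠ 2 := by
  rw [listsA_inr_intCast hn hk₁ hk₂, if_neg (by omega)] at ha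
  simp only [Finset.mem_insert, Finset.mem_singleton] at ha
  omega

end ListsA

theorem stmt2_general (n : ℕ) (hn : 8 ≤ n) :
    (∀ v, (listsA n v).card = 4) ∧
    ¬ ∃ c : ZMod n ⊕ ZMod n → ℕ, (∀ v, c v ∈ listsA n v) ∧
      ∀ ⦃u v⦄, (square (cubicGraphA n)).Adj u v → c u ≠ c v := by
  refine ⟨fun v => ?_, fun ⟨c, hc, hadj⟩ => ?_⟩
  · rcases v with i | i <;> simp only [listsA]
    · rfl
    · split_ifs <;> rfl
  exact (isSquareColoring_of_forall_adj (by omega) hadj).false_of_lists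
    (fun _ => mem_Icc_of_mem_listsA_inl (hc _))
    (fun _ => Finset.mem_Icc.mp (listsA_subset_Icc _ (hc _)))
    (fun _ hk₁ hk₂ => ne_three_of_mem_listsA_inr hn hk₁ hk₂ (hc _))
    (fun _ hk₁ hk₂ hk => ne_two_of_mem_listsA_inr hn hk₁ hk₂ hk (hc _))

/-- For `n ≥ 8` divisible by `4`, the square of the graph admits lists of size 4,
each of the form `{1,…,5} \ {i}`, from which no proper coloring exists. -/
theorem stmt2 (n : ℕ) (hn : 8 ≤ n) (h4 : 4 ∣ n) :
    (∀ v, (listsA n v).card = 4) ∧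
    ¬ ∃ c : ZMod n ⊕ ZMod n → ℕ, (∀ v, c v ∈ listsA n v) ∧
      ∀ ⦃u v⦄, (square (cubicGraphA n)).Adj u v → c u ≠ c v :=
  stmt2_general n hn
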